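/- arXiv:2006.12042 — 2 statements merged into one kernel-verified Lean document; each statement's English description precedes it below -/
import Mathlib

section
/- Let r be a natural number. If U belongs to F(r+1), i.e., U is implementable by a circuit with exactly r+1 CX gates, then there exist U' ∈ F(r), indices i ≠ j in Fin n, and l ∈ {0,…,m/d−1} such that U = T_j^l · CX_{i,j} · U'. -/
open Matrix

noncomputable section

/-- ω = exp(2πi/m). -/
def omega (m : ℕ) : ℂ := Complex.exp (2 * Real.pi * Complex.I / m)

/-- X_i : the permutation matrix of the map x ↦ Function.update x i (x i + 1). -/
def Xn (n : ℕ) (i : Fin n) : Matrix (Fin n → ZMod 2) (Fin n → ZMod 2) ℂ :=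
  Matrix.of fun x y => if x = Function.update y i (y i + 1) then 1 else 0

/-- T_i : the diagonal matrix whose (x,x) entry is ω^((x i).val). -/
def Tn (m n : ℕ) (i : Fin n) : Matrix (Fin n → ZMod 2) (Fin n → ZMod 2) ℂ :=
  Matrix.diagonal fun x => omega m ^ (x i).val

/-- CX_{i,j} : the permutation matrix of the map x ↦ Function.update x j (x j + x i). -/
def CXn (n : ℕ) (i j : Fin n) : Matrix (Fin n → ZMod 2) (Fin n → ZMod 2) ℂ :=
  Matrix.of fun x y => if x = Function.update y j (y j + y i) then 1 else 0

/-- A gate of a CX-circuit: some X_i, some power of some T_i, or some CX_{i,j} with i ≠ j. -/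
inductive GateCX (n : ℕ) where
  | X (i : Fin n)
  | Tpow (i : Fin n) (l : ℕ)
  | CX (i j : Fin n) (h : i ≠ j)

/-- The matrix of a gate. -/
def GateCX.toMatrix (m : ℕ) {n : ℕ} : GateCX n → Matrix (Fin n → ZMod 2) (Fin n → ZMod 2) ℂ
  | .X i => Xn n i
  | .Tpow i l => Tn m n i ^ l
  | .CX i j _ => CXn n i j

/-- Whether a gate is a CX gate. -/
def GateCX.isCX {n : ℕ} : GateCX n → Bool
  | .CX _ _ _ => true
  | _ => false

/-- F(r) : the set of matrices implementable by a circuit with exactly r CX gates. -/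
def Fset (m n r : ℕ) : Set (Matrix (Fin n → ZMod 2) (Fin n → ZMod 2) ℂ) :=
  {U | ∃ L : List (GateCX n), (L.map (GateCX.toMatrix m)).prod = U ∧
    L.countP (fun g => g.isCX) = r}

/-- Two matrices are phase-equivalent if they differ by a nonzero scalar. -/
def PhaseEq {α : Type*} (U V : Matrix α α ℂ) : Prop := ∃ c : ℂ, c ≠ 0 ∧ U = c • V


/-!
Induct on the circuit. If its first gate is `CX_{i,j}`, take `l = 0`. Otherwise the rest is
`T_j^l · CX_{i,j} · U'`, and the first gate is pushed through `T_j^l · CX_{i,j}`, leaving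
CX-free gates behind on the right: `T_k^a` and `X_k` commute with both factors up to such
corrections, except that `X_j` reverses the phase, `X_j T_j^l = T_j^{(m-1) l} (T_j^l X_j T_j^l)`
with `T_j^l X_j T_j^l = ω^l X_j`. The exponent is then reduced modulo `k = m / gcd m 2`:
as `ω^k = ±1`, `T_j^k · CX_{i,j} = CX_{i,j} · T_i^k T_j^k`.
-/

section BasisMap

variable {α R : Type*} [Fintype α] [DecidableEq α] [Semiring R]

variable (R) in
def basisMapMatrix (σ : α → α) : Matrix α α R :=
  Matrix.of fun x y => if x = σ y then 1 else 0

theorem basisMapMatrix_mul_basisMapMatrix (σ τ : α → α) :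
    basisMapMatrix R σ * basisMapMatrix R τ = basisMapMatrix R (σ ∘ τ) := by
  ext x y
  simp only [basisMapMatrix, mul_apply, of_apply, mul_ite, mul_one, mul_zero,
    Finset.sum_ite_eq', Finset.mem_univ, if_true, Function.comp_apply]

theorem diagonal_mul_basisMapMatrix (f : α → R) (σ : α → α) :
    diagonal f * basisMapMatrix R σ = basisMapMatrix R σ * diagonal (f ∘ σ) := by
  ext x y
  by_cases h : x = σ y <;> simp [basisMapMatrix, h]

theorem commute_diagonal_basisMapMatrix {f : α → R} {σ : α → α} (h : f ∘ σ = f) :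
    Commute (diagonal f) (basisMapMatrix R σ) := by
  rw [Commute, SemiconjBy, diagonal_mul_basisMapMatrix, h]

end BasisMap

section BitMaps

variable {ι : Type*} [DecidableEq ι]

def flipBit (i : ι) (x : ι → ZMod 2) : ι → ZMod 2 :=
  Function.update x i (x i + 1)

def cnotMap (i j : ι) (x : ι → ZMod 2) : ι → ZMod 2 :=
  Function.update x j (x j + x i)

theorem flipBit_comp_cnotMap_of_ne {i j k : ι} (hki : k ≠ i) :
    flipBit k ∘ cnotMap i j = cnotMap i j ∘ flipBit k := by
  funext x t
  by_cases htk : t = k <;> by_cases htj : t = j <;>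
    simp_all [flipBit, cnotMap, Function.update_apply, Ne.symm hki]
  ring

theorem flipBit_comp_cnotMap_self {i j : ι} (hij : i ≠ j) :
    flipBit i ∘ cnotMap i j = cnotMap i j ∘ flipBit i ∘ flipBit j := by
  funext x t
  by_cases hti : t = i <;> by_cases htj : t = j <;>
    simp_all [flipBit, cnotMap, Ne.symm hij]
  ring_nf
  reduce_mod_char

end BitMaps

theorem ZMod.val_add_one_add_val (a : ZMod 2) : (a + 1).val + a.val = 1 := by
  fin_cases a <;> rfl

theorem pow_val_add_of_sq_eq_one {M : Type*} [Monoid M] {ζ : M} (h : ζ ^ 2 = 1)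
    (a b : ZMod 2) : ζ ^ (a + b).val = ζ ^ a.val * ζ ^ b.val := by
  rw [ZMod.val_add, ← pow_eq_pow_mod _ h, pow_add]

theorem omega_pow_self (m : ℕ) : omega m ^ m = 1 := by
  rcases m.eq_zero_or_pos with rfl | hm
  · exact pow_zero _
  · exact (Complex.isPrimitiveRoot_exp m hm.ne').pow_eq_one

theorem omega_pow_div_gcd_two_sq (m : ℕ) : (omega m ^ (m / m.gcd 2)) ^ 2 = 1 := by
  have h : m / m.gcd 2 * 2 = Nat.lcm m 2 := by
    rw [Nat.lcm, Nat.div_mul_right_comm (Nat.gcd_dvd_left m 2)]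
  obtain ⟨c, hc⟩ := Nat.dvd_lcm_left m 2
  rw [← pow_mul, h, hc, pow_mul, omega_pow_self, one_pow]

section Gates

variable {m n : ℕ}

theorem Xn_eq_basisMapMatrix (i : Fin n) : Xn n i = basisMapMatrix ℂ (flipBit i) := rfl

theorem CXn_eq_basisMapMatrix (i j : Fin n) : CXn n i j = basisMapMatrix ℂ (cnotMap i j) := rfl

theorem Tn_pow_eq_diagonal (j : Fin n) (l : ℕ) :
    Tn m n j ^ l = diagonal fun x => (omega m ^ l) ^ (x j).val := by
  rw [Tn, diagonal_pow]
  congr 1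
  funext x
  exact pow_right_comm _ _ _

theorem Tn_pow_self (j : Fin n) : Tn m n j ^ m = 1 := by
  rw [Tn_pow_eq_diagonal, omega_pow_self]
  simp

theorem commute_Xn_CXn {i j k : Fin n} (hki : k ≠ i) : Commute (Xn n k) (CXn n i j) := by
  rw [Commute, SemiconjBy, Xn_eq_basisMapMatrix, CXn_eq_basisMapMatrix,
    basisMapMatrix_mul_basisMapMatrix, basisMapMatrix_mul_basisMapMatrix,
    flipBit_comp_cnotMap_of_ne hki]

theorem Xn_mul_CXn_self {i j : Fin n} (hij : i ≠ j) :
    Xn n i * CXn n i j = CXn n i j * (Xn n i * Xn n j) := by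
  simp only [Xn_eq_basisMapMatrix, CXn_eq_basisMapMatrix, basisMapMatrix_mul_basisMapMatrix,
    flipBit_comp_cnotMap_self hij]

theorem commute_Tn_Tn (j k : Fin n) : Commute (Tn m n k) (Tn m n j) :=
  commute_diagonal _ _

theorem commute_Tn_CXn {i j k : Fin n} (hkj : k ≠ j) : Commute (Tn m n k) (CXn n i j) := by
  refine commute_diagonal_basisMapMatrix (funext fun x => ?_)
  simp [hkj]

theorem commute_Xn_Tn {j k : Fin n} (hkj : k ≠ j) : Commute (Xn n k) (Tn m n j) := by
  refine (commute_diagonal_basisMapMatrix (funext fun x => ?_)).symm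
  simp [Ne.symm hkj]

theorem Tn_pow_mul_Xn_mul_Tn_pow (j : Fin n) (l : ℕ) :
    Tn m n j ^ l * Xn n j * Tn m n j ^ l = omega m ^ l • Xn n j := by
  ext x y
  by_cases h : x = flipBit j y
  · simp [Tn_pow_eq_diagonal, Xn_eq_basisMapMatrix, basisMapMatrix, diagonal_mul, mul_diagonal,
      h, flipBit, ← pow_add, ZMod.val_add_one_add_val]
  · simp [Tn_pow_eq_diagonal, Xn_eq_basisMapMatrix, basisMapMatrix, diagonal_mul, mul_diagonal, h]

theorem Tn_pow_div_gcd_two_mul_CXn (i j : Fin n) :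
    Tn m n j ^ (m / m.gcd 2) * CXn n i j
      = CXn n i j * (Tn m n i ^ (m / m.gcd 2) * Tn m n j ^ (m / m.gcd 2)) := by
  simp only [Tn_pow_eq_diagonal, CXn_eq_basisMapMatrix, diagonal_mul_basisMapMatrix,
    diagonal_mul_diagonal]
  congr 2
  funext x
  simp [cnotMap, pow_val_add_of_sq_eq_one (omega_pow_div_gcd_two_sq m), mul_comm]

end Gates

section Circuits

variable {m n : ℕ}

theorem mul_mem_Fset {r s : ℕ} {U V : Matrix (Fin n → ZMod 2) (Fin n → ZMod 2) ℂ}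
    (hU : U ∈ Fset m n r) (hV : V ∈ Fset m n s) : U * V ∈ Fset m n (r + s) := by
  obtain ⟨L, rfl, rfl⟩ := hU
  obtain ⟨L', rfl, rfl⟩ := hV
  exact ⟨L ++ L', by simp, List.countP_append ..⟩

variable (m n) in
def cxFree : Submonoid (Matrix (Fin n → ZMod 2) (Fin n → ZMod 2) ℂ) where
  carrier := Fset m n 0
  mul_mem' := mul_mem_Fset
  one_mem' := ⟨[], rfl, rfl⟩

theorem Xn_mem_cxFree (i : Fin n) : Xn n i ∈ cxFree m n :=
  ⟨[.X i], by simp [GateCX.toMatrix], rfl⟩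

theorem Tn_pow_mem_cxFree (i : Fin n) (l : ℕ) : Tn m n i ^ l ∈ cxFree m n :=
  ⟨[.Tpow i l], by simp [GateCX.toMatrix], rfl⟩

theorem div_gcd_two_pos (hm : 0 < m) : 0 < m / m.gcd 2 :=
  Nat.div_pos (Nat.gcd_le_left 2 hm) (Nat.gcd_pos_of_pos_left 2 hm)

theorem exists_lt_div_gcd_Tn_pow_mul_CXn_eq (hm : 0 < m) (i j : Fin n) (e : ℕ) :
    ∃ l < m / m.gcd 2, ∃ A ∈ cxFree m n,
      Tn m n j ^ e * CXn n i j = Tn m n j ^ l * CXn n i j * A := by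
  set k := m / m.gcd 2
  have hsemi : SemiconjBy (CXn n i j) (Tn m n i ^ k * Tn m n j ^ k) (Tn m n j ^ k) :=
    (Tn_pow_div_gcd_two_mul_CXn i j).symm
  refine ⟨e % k, Nat.mod_lt e (div_gcd_two_pos hm), (Tn m n i ^ k * Tn m n j ^ k) ^ (e / k),
    pow_mem (mul_mem (Tn_pow_mem_cxFree i k) (Tn_pow_mem_cxFree j k)) _, ?_⟩
  rw [mul_assoc, (hsemi.pow_right (e / k)).eq, ← mul_assoc, ← pow_mul, ← pow_add,
    Nat.mod_add_div]

theorem exists_gate_mul_Tn_pow_mul_CXn (hm : 0 < m) {g : GateCX n} (hg : g.isCX = false)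
    {i j : Fin n} (hij : i ≠ j) (l : ℕ) :
    ∃ e, ∃ A ∈ cxFree m n,
      g.toMatrix m * (Tn m n j ^ l * CXn n i j) = Tn m n j ^ e * CXn n i j * A := by
  cases g with
  | CX => cases hg
  | Tpow k a =>
    by_cases hkj : k = j
    · subst hkj
      exact ⟨a + l, 1, one_mem _, by simp [GateCX.toMatrix, pow_add, mul_assoc]⟩
    · refine ⟨l, Tn m n k ^ a, Tn_pow_mem_cxFree k a, ?_⟩
      rw [GateCX.toMatrix, ← mul_assoc, ((commute_Tn_Tn j k).pow_pow a l).eq, mul_assoc,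
        ((commute_Tn_CXn hkj).pow_left a).eq, mul_assoc]
  | X k =>
    by_cases hkj : k = j
    · subst hkj
      have hT : Tn m n k ^ ((m - 1) * l) * Tn m n k ^ l = 1 := by
        rw [← pow_add, ← add_one_mul, Nat.sub_one_add_one hm.ne', pow_mul, Tn_pow_self, one_pow]
      refine ⟨(m - 1) * l, Tn m n k ^ l * Xn n k * Tn m n k ^ l,
        mul_mem (mul_mem (Tn_pow_mem_cxFree k l) (Xn_mem_cxFree k)) (Tn_pow_mem_cxFree k l), ?_⟩
      calc Xn n k * (Tn m n k ^ l * CXn n i k)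
          = Tn m n k ^ ((m - 1) * l) * (Tn m n k ^ l * Xn n k * Tn m n k ^ l) * CXn n i k := by
            simp only [← mul_assoc, hT, one_mul]
        _ = Tn m n k ^ ((m - 1) * l) * CXn n i k * (omega m ^ l • Xn n k) := by
            rw [Tn_pow_mul_Xn_mul_Tn_pow, mul_assoc, smul_mul_assoc,
              (commute_Xn_CXn (Ne.symm hij)).eq, ← mul_smul_comm, mul_assoc]
        _ = _ := by rw [Tn_pow_mul_Xn_mul_Tn_pow]
    · have hXT : Xn n k * Tn m n j ^ l = Tn m n j ^ l * Xn n k :=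
        ((commute_Xn_Tn hkj).pow_right l).eq
      by_cases hki : k = i
      · subst hki
        refine ⟨l, Xn n k * Xn n j, mul_mem (Xn_mem_cxFree k) (Xn_mem_cxFree j), ?_⟩
        rw [GateCX.toMatrix, ← mul_assoc, hXT, mul_assoc, Xn_mul_CXn_self hij, mul_assoc]
      · refine ⟨l, Xn n k, Xn_mem_cxFree k, ?_⟩
        rw [GateCX.toMatrix, ← mul_assoc, hXT, mul_assoc, (commute_Xn_CXn hki).eq, mul_assoc]

end Circuits

theorem F_succ_decomposition_general (m n : ℕ) (hm : 0 < m) (r : ℕ)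
    (U : Matrix (Fin n → ZMod 2) (Fin n → ZMod 2) ℂ) (hU : U ∈ Fset m n (r + 1)) :
    ∃ U' ∈ Fset m n r, ∃ i j : Fin n, ∃ l : ℕ, i ≠ j ∧ l < m / Nat.gcd m 2 ∧
      U = Tn m n j ^ l * CXn n i j * U' := by
  obtain ⟨L, rfl, hL⟩ := hU
  induction L with
  | nil => simp at hL
  | cons g L ih =>
    cases hg : g.isCX
    · obtain ⟨U', hU', i, j, l, hij, -, hprod⟩ := ih (by simpa [hg] using hL)
      obtain ⟨e, A, hA, hgA⟩ := exists_gate_mul_Tn_pow_mul_CXn hm hg hij l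
      obtain ⟨l', hl', A', hA', he⟩ := exists_lt_div_gcd_Tn_pow_mul_CXn_eq hm i j e
      refine ⟨A' * A * U', by simpa using mul_mem_Fset (mul_mem hA' hA) hU',
        i, j, l', hij, hl', ?_⟩
      rw [List.map_cons, List.prod_cons, hprod, ← mul_assoc, hgA, he]
      simp only [mul_assoc]
    · cases g with
      | CX i j hij =>
        exact ⟨_, ⟨L, rfl, by simpa [GateCX.isCX] using hL⟩, i, j, 0, hij, div_gcd_two_pos hm,
          by simp [GateCX.toMatrix]⟩
      | _ => cases hg

theorem F_succ_decomposition (m n : ℕ) (hm : 0 < m) (hn : 0 < n) (r : ℕ)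
    (U : Matrix (Fin n → ZMod 2) (Fin n → ZMod 2) ℂ) (hU : U ∈ Fset m n (r + 1)) :
    ∃ U' ∈ Fset m n r, ∃ i j : Fin n, ∃ l : ℕ, i ≠ j ∧ l < m / Nat.gcd m 2 ∧
      U = Tn m n j ^ l * CXn n i j * U' :=
  F_succ_decomposition_general m n hm r U hU

end
end

section
/- Any element of the two-qubit CNOT-Dihedral group which has exactly one CS gate and one CX gate can be rewritten with no CS gates and exactly one CX gate: if a 4×4 matrix U is a product of a list of matrices, each entry being X₀, X₁, a power of T₀ or T₁, CX₀₁, CX₁₀, CS, or CS^{−1}, in which exactly one entry is CS or CS^{−1} and exactly one entry is CX₀₁ or CX₁₀, then U is phase-equivalent to a product of a list of matrices, each entry being X₀, X₁, a power of T₀ or T₁, CX₀₁, or CX₁₀, in which exactly one entry is CX₀₁ or CX₁₀ and no entry is CS or CS^{−1}. -/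
open Matrix Kronecker

noncomputable section

/-- The bit-flip gate X = !![0,1;1,0]. -/
def Xg : Matrix (Fin 2) (Fin 2) ℂ := !![0, 1; 1, 0]

/-- The phase gate T = !![1,0;0,ω]. -/
def Tg (m : ℕ) : Matrix (Fin 2) (Fin 2) ℂ := !![1, 0; 0, omega m]

/-- The inverse phase gate T⁻¹ = !![1,0;0,ω⁻¹]. -/
def Tginv (m : ℕ) : Matrix (Fin 2) (Fin 2) ℂ := !![1, 0; 0, (omega m)⁻¹]

/-- The Kronecker product of two 2×2 matrices, as a 4×4 matrix. -/
def kron (A B : Matrix (Fin 2) (Fin 2) ℂ) : Matrix (Fin 4) (Fin 4) ℂ :=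
  Matrix.reindex finProdFinEquiv finProdFinEquiv (A ⊗ₖ B)

/-- The controlled-X gate with control qubit 0 and target qubit 1. -/
def CX01 : Matrix (Fin 4) (Fin 4) ℂ :=
  !![1, 0, 0, 0; 0, 1, 0, 0; 0, 0, 0, 1; 0, 0, 1, 0]

/-- The controlled-X gate with control qubit 1 and target qubit 0. -/
def CX10 : Matrix (Fin 4) (Fin 4) ℂ :=
  !![1, 0, 0, 0; 0, 0, 0, 1; 0, 0, 1, 0; 0, 1, 0, 0]

/-- The controlled-S gate, the diagonal matrix with entries (1,1,1,ω²). -/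
def CSg (m : ℕ) : Matrix (Fin 4) (Fin 4) ℂ :=
  Matrix.diagonal ![1, 1, 1, (omega m) ^ 2]

/-- The inverse controlled-S gate, the diagonal matrix with entries (1,1,1,ω⁻²). -/
def CSginv (m : ℕ) : Matrix (Fin 4) (Fin 4) ℂ :=
  Matrix.diagonal ![1, 1, 1, ((omega m) ^ 2)⁻¹]
/-- X₀ = X ⊗ 1. -/
def X0 : Matrix (Fin 4) (Fin 4) ℂ := kron Xg 1

/-- X₁ = 1 ⊗ X. -/
def X1 : Matrix (Fin 4) (Fin 4) ℂ := kron 1 Xg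

/-- T₀ = T ⊗ 1. -/
def T0 (m : ℕ) : Matrix (Fin 4) (Fin 4) ℂ := kron (Tg m) 1

/-- T₁ = 1 ⊗ T. -/
def T1 (m : ℕ) : Matrix (Fin 4) (Fin 4) ℂ := kron 1 (Tg m)

/-- A gate of a two-qubit CNOT-Dihedral circuit: X₀, X₁, a power of T₀ or T₁,
CX₀₁, CX₁₀, CS, or CS⁻¹. -/
inductive GateAll where
  | X0 | X1
  | T0pow (l : ℕ)
  | T1pow (l : ℕ)
  | CX01 | CX10
  | CS | CSinv

/-- The matrix of a gate. -/
def GateAll.toMatrix (m : ℕ) : GateAll → Matrix (Fin 4) (Fin 4) ℂ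
  | .X0 => _root_.X0
  | .X1 => _root_.X1
  | .T0pow l => T0 m ^ l
  | .T1pow l => T1 m ^ l
  | .CX01 => _root_.CX01
  | .CX10 => _root_.CX10
  | .CS => CSg m
  | .CSinv => CSginv m

/-- Whether a gate is a CS or CS⁻¹ gate. -/
def GateAll.isCS : GateAll → Bool
  | .CS => true
  | .CSinv => true
  | _ => false

/-- Whether a gate is a CX gate. -/
def GateAll.isCX : GateAll → Bool
  | .CX01 => true
  | .CX10 => true
  | _ => false


/-! Every gate is a monomial matrix: X₀, X₁, CX₀₁ and CX₁₀ permute the computational basis and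
the other gates are diagonal, so moving a diagonal gate past a permutation gate just permutes its
diagonal. Moving CS = diag(1, 1, 1, w²) (w = ω, or w = ω⁻¹ for CS⁻¹) to the right past a
single-qubit gate therefore costs only T-gates: T-gates commute with it, and past X₀ it becomes
diag(1, w², 1, 1), a power of T₁ times the CS gate with the inverse phase (symmetrically for
X₁). When it reaches the CX gate it disappears: for bits a, b we have 2ab = a + b - (a ⊕ b), so
CS is a product of phases on a, on b and on a ⊕ b, and the CX gate turns the phase on a ⊕ b into
a single-qubit phase. If the CX gate comes before the CS gate, transpose: all gates are
symmetric, so transposing reverses a circuit. -/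

open Matrix

theorem omega_mul_omega_pow_pred (m : ℕ) : omega m * omega m ^ (m - 1) = 1 := by
  rcases m with _ | m
  · -- division by zero makes `omega 0 = exp 0 = 1`
    simp [omega]
  · rw [← pow_succ', Nat.add_sub_cancel]
    exact (Complex.isPrimitiveRoot_exp _ m.succ_ne_zero).pow_eq_one

theorem X0_eq : X0 = !![0, 0, 1, 0; 0, 0, 0, 1; 1, 0, 0, 0; 0, 1, 0, 0] := by
  ext i j
  fin_cases i <;> fin_cases j <;> simp [X0, kron, Xg, finProdFinEquiv, Fin.divNat, Fin.modNat]

theorem X1_eq : X1 = !![0, 1, 0, 0; 1, 0, 0, 0; 0, 0, 0, 1; 0, 0, 1, 0] := by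
  ext i j
  fin_cases i <;> fin_cases j <;> simp [X1, kron, Xg, finProdFinEquiv, Fin.divNat, Fin.modNat]

theorem T0_pow (m l : ℕ) : T0 m ^ l = diagonal ![1, 1, omega m ^ l, omega m ^ l] := by
  have hT0 : T0 m = diagonal ![1, 1, omega m, omega m] := by
    ext i j
    fin_cases i <;> fin_cases j <;> simp [T0, kron, Tg, finProdFinEquiv, Fin.divNat, Fin.modNat]
  rw [hT0, diagonal_pow]
  congr 1
  ext i
  fin_cases i <;> simp

theorem T1_pow (m l : ℕ) : T1 m ^ l = diagonal ![1, omega m ^ l, 1, omega m ^ l] := by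
  have hT1 : T1 m = diagonal ![1, omega m, 1, omega m] := by
    ext i j
    fin_cases i <;> fin_cases j <;> simp [T1, kron, Tg, finProdFinEquiv, Fin.divNat, Fin.modNat]
  rw [hT1, diagonal_pow]
  congr 1
  ext i
  fin_cases i <;> simp

section PermutationGates

variable (a b c d : ℂ)

theorem diagonal_mul_X0 : diagonal ![a, b, c, d] * X0 = X0 * diagonal ![c, d, a, b] := by
  ext i j
  fin_cases i <;> fin_cases j <;> simp [X0_eq]

theorem diagonal_mul_X1 : diagonal ![a, b, c, d] * X1 = X1 * diagonal ![b, a, d, c] := by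
  ext i j
  fin_cases i <;> fin_cases j <;> simp [X1_eq]

theorem diagonal_mul_CX01 : diagonal ![a, b, c, d] * CX01 = CX01 * diagonal ![a, b, d, c] := by
  ext i j
  fin_cases i <;> fin_cases j <;> simp [CX01]

theorem diagonal_mul_CX10 : diagonal ![a, b, c, d] * CX10 = CX10 * diagonal ![a, d, c, b] := by
  ext i j
  fin_cases i <;> fin_cases j <;> simp [CX10]

end PermutationGates

section ControlledPhase

variable {w w' : ℂ}

theorem cs_mul_X0 (h : w * w' = 1) : diagonal ![1, 1, 1, w ^ 2] * X0 =
    X0 * (diagonal ![1, w ^ 2, 1, w ^ 2] * diagonal ![1, 1, 1, w' ^ 2]) := by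
  rw [diagonal_mul_X0, diagonal_mul_diagonal]
  congr 2
  ext i
  fin_cases i <;> simp [← mul_pow, h]

theorem cs_mul_X1 (h : w * w' = 1) : diagonal ![1, 1, 1, w ^ 2] * X1 =
    X1 * (diagonal ![1, 1, w ^ 2, w ^ 2] * diagonal ![1, 1, 1, w' ^ 2]) := by
  rw [diagonal_mul_X1, diagonal_mul_diagonal]
  congr 2
  ext i
  fin_cases i <;> simp [← mul_pow, h]

theorem cs_mul_CX01 (h : w * w' = 1) : diagonal ![1, 1, 1, w ^ 2] * CX01 =
    diagonal ![1, w, 1, w] * CX01 * (diagonal ![1, 1, w, w] * diagonal ![1, w', 1, w']) := by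
  rw [diagonal_mul_CX01, diagonal_mul_CX01, mul_assoc, diagonal_mul_diagonal,
    diagonal_mul_diagonal]
  congr 2
  ext i
  fin_cases i <;> simp [h, sq]

theorem cs_mul_CX10 (h : w * w' = 1) : diagonal ![1, 1, 1, w ^ 2] * CX10 =
    diagonal ![1, 1, w, w] * CX10 * (diagonal ![1, 1, w', w'] * diagonal ![1, w, 1, w]) := by
  rw [diagonal_mul_CX10, diagonal_mul_CX10, mul_assoc, diagonal_mul_diagonal,
    diagonal_mul_diagonal]
  congr 2
  ext i
  fin_cases i <;> simp [h, sq, mul_comm w']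

end ControlledPhase

def GateAll.IsSingleQubit : GateAll → Prop
  | .X0 | .X1 | .T0pow _ | .T1pow _ => True
  | _ => False

theorem GateAll.isSingleQubit_iff (g : GateAll) :
    g.IsSingleQubit ↔ ¬ g.isCS ∧ ¬ g.isCX := by
  cases g <;> simp [GateAll.IsSingleQubit, GateAll.isCS, GateAll.isCX]

def circuitMatrix (m : ℕ) (L : List GateAll) : Matrix (Fin 4) (Fin 4) ℂ :=
  (L.map (GateAll.toMatrix m)).prod

@[simp]
theorem circuitMatrix_nil (m : ℕ) : circuitMatrix m [] = 1 := rfl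

@[simp]
theorem circuitMatrix_cons (m : ℕ) (g : GateAll) (L : List GateAll) :
    circuitMatrix m (g :: L) = g.toMatrix m * circuitMatrix m L := List.prod_cons

@[simp]
theorem circuitMatrix_append (m : ℕ) (L L' : List GateAll) :
    circuitMatrix m (L ++ L') = circuitMatrix m L * circuitMatrix m L' := by
  simp [circuitMatrix]

theorem GateAll.transpose_toMatrix (m : ℕ) (g : GateAll) : (g.toMatrix m)ᵀ = g.toMatrix m := by
  cases g with
  | X0 => rw [toMatrix, X0_eq]; ext i j; fin_cases i <;> fin_cases j <;> rfl
  | X1 => rw [toMatrix, X1_eq]; ext i j; fin_cases i <;> fin_cases j <;> rfl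
  | T0pow l => rw [toMatrix, T0_pow, diagonal_transpose]
  | T1pow l => rw [toMatrix, T1_pow, diagonal_transpose]
  | CX01 => ext i j; fin_cases i <;> fin_cases j <;> rfl
  | CX10 => ext i j; fin_cases i <;> fin_cases j <;> rfl
  | CS => exact diagonal_transpose _
  | CSinv => exact diagonal_transpose _

theorem circuitMatrix_reverse (m : ℕ) (L : List GateAll) :
    circuitMatrix m L.reverse = (circuitMatrix m L)ᵀ := by
  simp [circuitMatrix, transpose_list_prod, Function.comp_def, GateAll.transpose_toMatrix,
    List.map_reverse]

section Rewriting

variable (m : ℕ) {s : GateAll}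

theorem GateAll.exists_phase_of_isCS (hs : s.isCS) :
    ∃ (s' : GateAll) (r r' : ℕ), s'.isCS ∧ omega m ^ r * omega m ^ r' = 1 ∧
      s.toMatrix m = diagonal ![1, 1, 1, (omega m ^ r) ^ 2] ∧
      s'.toMatrix m = diagonal ![1, 1, 1, (omega m ^ r') ^ 2] := by
  have hinv : omega m ^ (m - 1) = (omega m)⁻¹ :=
    eq_inv_of_mul_eq_one_right (omega_mul_omega_pow_pred m)
  cases s with
  | CS => exact ⟨.CSinv, 1, m - 1, rfl, by simpa using omega_mul_omega_pow_pred m,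
      by simp [toMatrix, CSg], by simp [toMatrix, CSginv, hinv]⟩
  | CSinv => exact ⟨.CS, m - 1, 1, rfl, by simpa [mul_comm] using omega_mul_omega_pow_pred m,
      by simp [toMatrix, CSginv, hinv], by simp [toMatrix, CSg]⟩
  | _ => simp [isCS] at hs

theorem GateAll.exists_cs_mul_singleQubit {g : GateAll} (hs : s.isCS) (hg : g.IsSingleQubit) :
    ∃ (E : List GateAll) (s' : GateAll), (∀ e ∈ E, e.IsSingleQubit) ∧ s'.isCS ∧
      s.toMatrix m * g.toMatrix m = circuitMatrix m (g :: E) * s'.toMatrix m := by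
  obtain ⟨s', r, r', hs', hw, hsM, hs'M⟩ := exists_phase_of_isCS m hs
  cases g with
  | X0 =>
    refine ⟨[.T1pow (r * 2)], s', by simp [IsSingleQubit], hs', ?_⟩
    rw [hsM, hs'M]
    simp only [circuitMatrix_cons, circuitMatrix_nil, mul_one, toMatrix]
    rw [T1_pow, pow_mul, cs_mul_X0 hw, mul_assoc]
  | X1 =>
    refine ⟨[.T0pow (r * 2)], s', by simp [IsSingleQubit], hs', ?_⟩
    rw [hsM, hs'M]
    simp only [circuitMatrix_cons, circuitMatrix_nil, mul_one, toMatrix]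
    rw [T0_pow, pow_mul, cs_mul_X1 hw, mul_assoc]
  | T0pow l =>
    refine ⟨[], s, by simp, hs, ?_⟩
    rw [hsM]
    simp only [circuitMatrix_cons, circuitMatrix_nil, mul_one, toMatrix]
    rw [T0_pow, (commute_diagonal _ _).eq]
  | T1pow l =>
    refine ⟨[], s, by simp, hs, ?_⟩
    rw [hsM]
    simp only [circuitMatrix_cons, circuitMatrix_nil, mul_one, toMatrix]
    rw [T1_pow, (commute_diagonal _ _).eq]
  | _ => simp [IsSingleQubit] at hg

theorem GateAll.exists_cs_mul_cx {c : GateAll} (hs : s.isCS) (hc : c.isCX) :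
    ∃ A B : List GateAll, (∀ g ∈ A, g.IsSingleQubit) ∧ (∀ g ∈ B, g.IsSingleQubit) ∧
      s.toMatrix m * c.toMatrix m = circuitMatrix m (A ++ c :: B) := by
  obtain ⟨-, r, r', -, hw, hsM, -⟩ := exists_phase_of_isCS m hs
  cases c with
  | CX01 =>
    refine ⟨[.T1pow r], [.T0pow r, .T1pow r'], by simp [IsSingleQubit], by simp [IsSingleQubit],
      ?_⟩
    rw [hsM]
    simp only [circuitMatrix_append, circuitMatrix_cons, circuitMatrix_nil, mul_one, toMatrix]
    rw [T0_pow, T1_pow, T1_pow, cs_mul_CX01 hw, mul_assoc]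
  | CX10 =>
    refine ⟨[.T0pow r], [.T0pow r', .T1pow r], by simp [IsSingleQubit], by simp [IsSingleQubit],
      ?_⟩
    rw [hsM]
    simp only [circuitMatrix_append, circuitMatrix_cons, circuitMatrix_nil, mul_one, toMatrix]
    rw [T0_pow, T0_pow, T1_pow, cs_mul_CX10 hw, mul_assoc]
  | _ => simp [isCX] at hc

end Rewriting

section Circuits

variable (m : ℕ) {s c : GateAll}

theorem exists_cs_mul_circuitMatrix {P : List GateAll} (hP : ∀ g ∈ P, g.IsSingleQubit)
    (hs : s.isCS) :
    ∃ (P' : List GateAll) (s' : GateAll), (∀ g ∈ P', g.IsSingleQubit) ∧ s'.isCS ∧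
      s.toMatrix m * circuitMatrix m P = circuitMatrix m P' * s'.toMatrix m := by
  induction P generalizing s with
  | nil => exact ⟨[], s, by simp, hs, by simp⟩
  | cons g P ih =>
    simp only [List.forall_mem_cons] at hP
    obtain ⟨E, s₁, hE, hs₁, h₁⟩ := GateAll.exists_cs_mul_singleQubit m hs hP.1
    obtain ⟨P', s₂, hP', hs₂, h₂⟩ := ih hP.2 hs₁
    refine ⟨g :: E ++ P', s₂, ?_, hs₂, ?_⟩
    · exact List.forall_mem_append.2 ⟨List.forall_mem_cons.2 ⟨hP.1, hE⟩, hP'⟩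
    · rw [circuitMatrix_cons, ← mul_assoc, h₁, mul_assoc, h₂, circuitMatrix_append,
        mul_assoc]

theorem exists_circuitMatrix_eq_of_cs_before_cx {P Q R : List GateAll}
    (hP : ∀ g ∈ P, g.IsSingleQubit) (hQ : ∀ g ∈ Q, g.IsSingleQubit)
    (hR : ∀ g ∈ R, g.IsSingleQubit) (hs : s.isCS) (hc : c.isCX) :
    ∃ A B : List GateAll, (∀ g ∈ A, g.IsSingleQubit) ∧ (∀ g ∈ B, g.IsSingleQubit) ∧
      circuitMatrix m (P ++ s :: Q ++ c :: R) = circuitMatrix m (A ++ c :: B) := by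
  obtain ⟨Q', s', hQ', hs', hpush⟩ := exists_cs_mul_circuitMatrix m hQ hs
  obtain ⟨A, B, hA, hB, hcx⟩ := GateAll.exists_cs_mul_cx m hs' hc
  refine ⟨P ++ Q' ++ A, B ++ R,
    List.forall_mem_append.2 ⟨List.forall_mem_append.2 ⟨hP, hQ'⟩, hA⟩,
    List.forall_mem_append.2 ⟨hB, hR⟩, ?_⟩
  calc circuitMatrix m (P ++ s :: Q ++ c :: R)
      = circuitMatrix m P * (s.toMatrix m * circuitMatrix m Q) * c.toMatrix m *
          circuitMatrix m R := by simp [mul_assoc]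
    _ = circuitMatrix m P * circuitMatrix m Q' * (s'.toMatrix m * c.toMatrix m) *
          circuitMatrix m R := by rw [hpush]; simp only [mul_assoc]
    _ = circuitMatrix m (P ++ Q' ++ A ++ c :: (B ++ R)) := by rw [hcx]; simp [mul_assoc]

theorem exists_circuitMatrix_eq_of_cx_before_cs {P Q R : List GateAll}
    (hP : ∀ g ∈ P, g.IsSingleQubit) (hQ : ∀ g ∈ Q, g.IsSingleQubit)
    (hR : ∀ g ∈ R, g.IsSingleQubit) (hs : s.isCS) (hc : c.isCX) :
    ∃ A B : List GateAll, (∀ g ∈ A, g.IsSingleQubit) ∧ (∀ g ∈ B, g.IsSingleQubit) ∧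
      circuitMatrix m (P ++ c :: Q ++ s :: R) = circuitMatrix m (A ++ c :: B) := by
  obtain ⟨A, B, hA, hB, h⟩ := exists_circuitMatrix_eq_of_cs_before_cx m (P := R.reverse)
    (Q := Q.reverse) (R := P.reverse) (by simpa) (by simpa) (by simpa) hs hc
  refine ⟨B.reverse, A.reverse, by simpa, by simpa, ?_⟩
  have := congrArg transpose h
  rw [← circuitMatrix_reverse, ← circuitMatrix_reverse] at this
  simpa using this

end Circuits

theorem List.exists_eq_append_cons_of_countP_eq_one {α : Type*} {p : α → Bool} {L : List α}
    (h : L.countP p = 1) :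
    ∃ P a Q, L = P ++ a :: Q ∧ p a ∧ (∀ x ∈ P, ¬ p x) ∧ ∀ x ∈ Q, ¬ p x := by
  induction L with
  | nil => simp at h
  | cons b L ih =>
    by_cases hb : p b
    · rw [List.countP_cons_of_pos hb, Nat.add_eq_right, List.countP_eq_zero] at h
      exact ⟨[], b, L, rfl, hb, by simp, h⟩
    · rw [List.countP_cons_of_neg hb] at h
      obtain ⟨P, a, Q, rfl, ha, hP, hQ⟩ := ih h
      exact ⟨b :: P, a, Q, rfl, ha, List.forall_mem_cons.2 ⟨hb, hP⟩, hQ⟩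

theorem exists_eq_append_cs_cx {L : List GateAll} (hcs : L.countP (·.isCS) = 1)
    (hcx : L.countP (·.isCX) = 1) :
    ∃ (P Q R : List GateAll) (s c : GateAll), (∀ g ∈ P, g.IsSingleQubit) ∧
      (∀ g ∈ Q, g.IsSingleQubit) ∧ (∀ g ∈ R, g.IsSingleQubit) ∧ s.isCS ∧ c.isCX ∧
      (L = P ++ s :: Q ++ c :: R ∨ L = P ++ c :: Q ++ s :: R) := by
  obtain ⟨P, s, Q, rfl, hs, hPs, hQs⟩ := List.exists_eq_append_cons_of_countP_eq_one hcs
  have hsx : ¬ s.isCX := by cases s <;> simp_all [GateAll.isCS, GateAll.isCX]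
  rw [List.countP_append, List.countP_cons_of_neg hsx] at hcx
  have single : ∀ g : GateAll, ¬ g.isCS → ¬ g.isCX → g.IsSingleQubit :=
    fun g hcs hcx => g.isSingleQubit_iff.2 ⟨hcs, hcx⟩
  rcases Nat.add_eq_one_iff.1 hcx with ⟨hPx, hQx⟩ | ⟨hPx, hQx⟩
  · rw [List.countP_eq_zero] at hPx
    obtain ⟨Q₁, c, Q₂, rfl, hc, hQ₁x, hQ₂x⟩ := List.exists_eq_append_cons_of_countP_eq_one hQx
    refine ⟨P, Q₁, Q₂, s, c, fun g hg => single g (hPs g hg) (hPx g hg),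
      fun g hg => single g (hQs g (by simp [hg])) (hQ₁x g hg),
      fun g hg => single g (hQs g (by simp [hg])) (hQ₂x g hg), hs, hc, ?_⟩
    simp
  · rw [List.countP_eq_zero] at hQx
    obtain ⟨P₁, c, P₂, rfl, hc, hP₁x, hP₂x⟩ := List.exists_eq_append_cons_of_countP_eq_one hPx
    refine ⟨P₁, P₂, Q, s, c, fun g hg => single g (hPs g (by simp [hg])) (hP₁x g hg),
      fun g hg => single g (hPs g (by simp [hg])) (hP₂x g hg),
      fun g hg => single g (hQs g hg) (hQx g hg), hs, hc, ?_⟩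
    simp

theorem countP_append_cx_cons {A B : List GateAll} {c : GateAll} (hA : ∀ g ∈ A, g.IsSingleQubit)
    (hB : ∀ g ∈ B, g.IsSingleQubit) (hc : c.isCX) :
    (A ++ c :: B).countP (·.isCS) = 0 ∧ (A ++ c :: B).countP (·.isCX) = 1 := by
  have hcs : ¬ c.isCS := by cases c <;> simp_all [GateAll.isCS, GateAll.isCX]
  have hAB : ∀ g ∈ A ++ B, ¬ g.isCS ∧ ¬ g.isCX := fun g hg =>
    g.isSingleQubit_iff.1 (List.forall_mem_append.2 ⟨hA, hB⟩ g hg)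
  have hABcs : (A ++ B).countP (·.isCS) = 0 := List.countP_eq_zero.2 fun g hg => (hAB g hg).1
  have hABcx : (A ++ B).countP (·.isCX) = 0 := List.countP_eq_zero.2 fun g hg => (hAB g hg).2
  rw [List.countP_append] at hABcs hABcx
  simp only [List.countP_append, List.countP_cons, hc, hcs, Bool.false_eq_true, ↓reduceIte]
  omega

theorem one_CS_one_CX_removal_general (m : ℕ)
    (U : Matrix (Fin 4) (Fin 4) ℂ)
    (h : ∃ L : List GateAll, (L.map (GateAll.toMatrix m)).prod = U ∧
      L.countP (fun g => g.isCS) = 1 ∧ L.countP (fun g => g.isCX) = 1) :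
    ∃ L' : List GateAll, L'.countP (fun g => g.isCS) = 0 ∧
      L'.countP (fun g => g.isCX) = 1 ∧
      PhaseEq U ((L'.map (GateAll.toMatrix m)).prod) := by
  obtain ⟨L, rfl, hcs, hcx⟩ := h
  obtain ⟨P, Q, R, s, c, hP, hQ, hR, hs, hc, hL⟩ := exists_eq_append_cs_cx hcs hcx
  obtain ⟨A, B, hA, hB, hAB⟩ : ∃ A B : List GateAll, (∀ g ∈ A, g.IsSingleQubit) ∧
      (∀ g ∈ B, g.IsSingleQubit) ∧ circuitMatrix m L = circuitMatrix m (A ++ c :: B) := by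
    rcases hL with rfl | rfl
    · exact exists_circuitMatrix_eq_of_cs_before_cx m hP hQ hR hs hc
    · exact exists_circuitMatrix_eq_of_cx_before_cs m hP hQ hR hs hc
  obtain ⟨hA₀, hB₁⟩ := countP_append_cx_cons hA hB hc
  exact ⟨A ++ c :: B, hA₀, hB₁, 1, one_ne_zero, by rw [one_smul]; exact hAB⟩

theorem one_CS_one_CX_removal (m : ℕ) (hm : 0 < m)
    (U : Matrix (Fin 4) (Fin 4) ℂ)
    (h : ∃ L : List GateAll, (L.map (GateAll.toMatrix m)).prod = U ∧
      L.countP (fun g => g.isCS) = 1 ∧ L.countP (fun g => g.isCX) = 1) :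
    ∃ L' : List GateAll, L'.countP (fun g => g.isCS) = 0 ∧
      L'.countP (fun g => g.isCX) = 1 ∧
      PhaseEq U ((L'.map (GateAll.toMatrix m)).prod) :=
  one_CS_one_CX_removal_general m U h

end
end
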